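/- Let (S, 𝒜, A) be a measure space, m > 0, and let N_det : S → (0, ∞) be a measurable function such that 0 < ∫_S N_det(x)^{−m} dA(x) < ∞. Define the hazard rate h(n) = ∫_S (m/N_det(x))·(n/N_det(x))^{m−1} dA(x) for n > 0. Then the cumulative hazard H(n) = ∫₀ⁿ h(t) dt equals n^m · ∫_S N_det(x)^{−m} dA(x) for all n ≥ 0, and consequently F(n) := 1 − exp(−H(n)) is the Weibull cumulative distribution function 1 − exp(−(n/η)^m) with scale parameter η = (∫_S N_det(x)^{−m} dA(x))^{−1/m} and shape parameter m. -/

import Mathlib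

/-!
The local hazard density separates as `m / N * (t / N) ^ (m - 1) = m * t ^ (m - 1) * N ^ (-m)`,
so the hazard rate is `m * t ^ (m - 1)` times the constant `∫ N ^ (-m)`, and integrating in `t`
gives `n ^ m * ∫ N ^ (-m)`. With `η = (∫ N ^ (-m)) ^ (-1 / m)` this is exactly `(n / η) ^ m`.
-/

open MeasureTheory intervalIntegral Real

lemma div_mul_div_rpow_sub_one {m N t : ℝ} (hN : 0 < N) (ht : 0 ≤ t) :
    m / N * (t / N) ^ (m - 1) = m * t ^ (m - 1) * N ^ (-m) := by
  have hNm : N ^ (-m) = N⁻¹ * (N ^ (m - 1))⁻¹ := by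
    rw [← rpow_neg_one, ← rpow_neg hN.le, ← rpow_add hN]
    ring_nf
  rw [div_rpow ht hN.le, hNm]
  ring

lemma integral_local_hazard {S : Type*} [MeasurableSpace S] (A : Measure S) {m t : ℝ}
    {N : S → ℝ} (hN : ∀ x, 0 < N x) (ht : 0 ≤ t) :
    ∫ x, m / N x * (t / N x) ^ (m - 1) ∂A = m * t ^ (m - 1) * ∫ x, N x ^ (-m) ∂A := by
  simp_rw [div_mul_div_rpow_sub_one (hN _) ht]
  exact integral_const_mul _ _

lemma integral_mul_rpow_sub_one {m : ℝ} (hm : 0 < m) (n : ℝ) :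
    ∫ t in (0 : ℝ)..n, m * t ^ (m - 1) = n ^ m := by
  rw [intervalIntegral.integral_const_mul, integral_rpow (Or.inl (by linarith)),
    sub_add_cancel, zero_rpow hm.ne', sub_zero, mul_div_cancel₀ _ hm.ne']

lemma div_rpow_neg_one_div_rpow {m n c : ℝ} (hm : m ≠ 0) (hn : 0 ≤ n) (hc : 0 < c) :
    (n / c ^ (-1 / m)) ^ m = n ^ m * c := by
  rw [div_rpow hn (rpow_nonneg hc.le _), ← rpow_mul hc.le, div_mul_cancel₀ _ hm, rpow_neg_one,
    div_inv_eq_mul]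

theorem cumulative_hazard_eq_and_weibull_general
    {S : Type*} [MeasurableSpace S] (A : Measure S)
    (m : ℝ) (hm : 0 < m)
    (Ndet : S → ℝ) (hpos : ∀ x, 0 < Ndet x)
    (hIpos : 0 < ∫ x, Ndet x ^ (-m) ∂A)
    (h H F : ℝ → ℝ)
    (hh : ∀ n : ℝ, h n = ∫ x, (m / Ndet x) * (n / Ndet x) ^ (m - 1) ∂A)
    (hH : ∀ n : ℝ, H n = ∫ t in (0 : ℝ)..n, h t)
    (hF : ∀ n : ℝ, F n = 1 - Real.exp (-(H n))) :
    ∀ n ≥ (0 : ℝ),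
      H n = n ^ m * ∫ x, Ndet x ^ (-m) ∂A ∧
      F n = 1 - Real.exp (-((n / (∫ x, Ndet x ^ (-m) ∂A) ^ (-1 / m)) ^ m)) := by
  intro n hn
  set I := ∫ x, Ndet x ^ (-m) ∂A
  have hazard : ∀ t ∈ Set.uIoc 0 n, h t = m * t ^ (m - 1) * I := fun t ht => by
    rw [Set.uIoc_of_le hn] at ht
    rw [hh t, integral_local_hazard A hpos ht.1.le]
  have cumulative : H n = n ^ m * I := by
    rw [hH n, integral_congr_ae (.of_forall hazard), intervalIntegral.integral_mul_const,
      integral_mul_rpow_sub_one hm]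
  refine ⟨cumulative, ?_⟩
  rw [hF n, cumulative, div_rpow_neg_one_div_rpow hm.ne' hn hIpos]

/-- On a measure space `(S, 𝒜, A)` with a measurable positive life field
`N_det` such that `0 < ∫ N_det^(-m) dA < ∞`, the hazard rate
`h n = ∫ (m / N_det x) * (n / N_det x)^(m-1) dA` has cumulative hazard
`H n = ∫₀ⁿ h t dt = n^m * ∫ N_det^(-m) dA`, so that `F n = 1 - exp (-H n)` is the Weibull
cdf with scale `η = (∫ N_det^(-m) dA)^(-1/m)` and shape `m`. -/
theorem cumulative_hazard_eq_and_weibull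
    {S : Type*} [MeasurableSpace S] (A : Measure S)
    (m : ℝ) (hm : 0 < m)
    (Ndet : S → ℝ) (hmeas : Measurable Ndet) (hpos : ∀ x, 0 < Ndet x)
    (hint : Integrable (fun x => Ndet x ^ (-m)) A)
    (hIpos : 0 < ∫ x, Ndet x ^ (-m) ∂A)
    (h H F : ℝ → ℝ)
    (hh : ∀ n : ℝ, h n = ∫ x, (m / Ndet x) * (n / Ndet x) ^ (m - 1) ∂A)
    (hH : ∀ n : ℝ, H n = ∫ t in (0 : ℝ)..n, h t)
    (hF : ∀ n : ℝ, F n = 1 - Real.exp (-(H n))) :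
    ∀ n ≥ (0 : ℝ),
      H n = n ^ m * ∫ x, Ndet x ^ (-m) ∂A ∧
      F n = 1 - Real.exp (-((n / (∫ x, Ndet x ^ (-m) ∂A) ^ (-1 / m)) ^ m)) :=
  cumulative_hazard_eq_and_weibull_general A m hm Ndet hpos hIpos h H F hh hH hF
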